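/- arXiv:2601.15781 — 6 statements merged into one kernel-verified Lean document; each statement's English description precedes it below -/
import Mathlib

section
/- For all real numbers r, s, t, α, β, let B = exp(r·p₀ + t·R_{β/2}·p₁·R_{−β/2}) · exp(s·R_α·f₁·R_{−α}) and C = exp(t·p₁) · R_{α−β/2} · exp(s·f₁), where exp denotes the matrix exponential. Then tr( R_{2π/3} · (B Bᵀ) · R_{2π/3} · (B Bᵀ)⁻¹ ) = tr( R_{2π/3} · (C Cᵀ) · R_{2π/3} · (C Cᵀ)⁻¹ ). -/
open Matrix Real

/-- The rotation matrix `R_θ`. -/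
noncomputable def R (θ : ℝ) : Matrix (Fin 3) (Fin 3) ℝ :=
  !![1, 0, 0; 0, Real.cos θ, -Real.sin θ; 0, Real.sin θ, Real.cos θ]

def p₀ : Matrix (Fin 3) (Fin 3) ℝ := !![2, 0, 0; 0, -1, 0; 0, 0, -1]

noncomputable def p₁ : Matrix (Fin 3) (Fin 3) ℝ := !![0, 0, 0; 0, 1/2, 0; 0, 0, -(1/2)]

def f₁ : Matrix (Fin 3) (Fin 3) ℝ := !![0, 1, 0; 1, 0, 0; 0, 0, 0]

lemma Rmul (θ φ : ℝ) : R θ * R φ = R (θ + φ) := by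
  ext i j
  fin_cases i <;> fin_cases j <;>
    simp [R, Matrix.mul_apply, Fin.sum_univ_three, Matrix.vecHead, Matrix.vecTail,
      Real.cos_add, Real.sin_add] <;> ring

lemma Rzero : R 0 = 1 := by
  ext i j
  fin_cases i <;> fin_cases j <;>
    simp [R, Matrix.one_apply, Matrix.vecHead, Matrix.vecTail]

lemma RisUnit (θ : ℝ) : IsUnit (R θ) :=
  ⟨⟨R θ, R (-θ), by rw [Rmul, add_neg_cancel, Rzero], by rw [Rmul, neg_add_cancel, Rzero]⟩, rfl⟩

lemma Rinv (θ : ℝ) : (R θ)⁻¹ = R (-θ) :=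
  Matrix.inv_eq_right_inv (by rw [Rmul, add_neg_cancel, Rzero])

lemma Rtranspose (θ : ℝ) : (R θ)ᵀ = R (-θ) := by
  ext i j
  fin_cases i <;> fin_cases j <;>
    simp [R, Matrix.vecHead, Matrix.vecTail]

lemma p₀_comm_R (θ : ℝ) : p₀ * R θ = R θ * p₀ := by
  ext i j
  fin_cases i <;> fin_cases j <;>
    simp [R, p₀, Matrix.mul_apply, Fin.sum_univ_three, Matrix.vecHead, Matrix.vecTail]

lemma p₀_transpose : p₀ᵀ = p₀ := by
  ext i j
  fin_cases i <;> fin_cases j <;> simp [p₀, Matrix.vecHead, Matrix.vecTail]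

lemma p₀_comm_p₁ : Commute p₀ p₁ := by
  show _ = _
  ext i j
  fin_cases i <;> fin_cases j <;>
    simp [p₀, p₁, Matrix.mul_apply, Fin.sum_univ_three, Matrix.vecHead, Matrix.vecTail]

lemma comm_exp {A M : Matrix (Fin 3) (Fin 3) ℝ} (hM : IsUnit M) (h : M * A = A * M) :
    M * NormedSpace.exp A = NormedSpace.exp A * M := by
  have hd : IsUnit M.det := (Matrix.isUnit_iff_isUnit_det _).mp hM
  have hc : M * A * M⁻¹ = A := by
    rw [h, mul_assoc, Matrix.mul_nonsing_inv _ hd, mul_one]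
  have key := Matrix.exp_conj M A hM
  rw [hc] at key
  nth_rewrite 2 [key]
  rw [mul_assoc _ M⁻¹ M, Matrix.nonsing_inv_mul _ hd, mul_one]

lemma trace_key (Q Rτ D : Matrix (Fin 3) (Fin 3) ℝ) (hQ : IsUnit Q) (hQt : IsUnit Qᵀ)
    (h1 : Rτ * Q = Q * Rτ) (h2 : Rτ * Qᵀ = Qᵀ * Rτ) :
    (Rτ * (Q * D * Qᵀ) * Rτ * (Q * D * Qᵀ)⁻¹).trace = (Rτ * D * Rτ * D⁻¹).trace := by
  have hdQ : IsUnit Q.det := (Matrix.isUnit_iff_isUnit_det _).mp hQ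
  have hdQt : IsUnit Qᵀ.det := (Matrix.isUnit_iff_isUnit_det _).mp hQt
  have e2 : ∀ Z, Qᵀ * (Rτ * (Qᵀ⁻¹ * Z)) = Rτ * Z := fun Z => by
    rw [← mul_assoc, ← h2, mul_assoc, ← mul_assoc Qᵀ, Matrix.mul_nonsing_inv _ hdQt, one_mul]
  have e1 : ∀ Z, Rτ * (Q * Z) = Q * (Rτ * Z) := fun Z => by
    rw [← mul_assoc, h1, mul_assoc]
  have key : Rτ * (Q * D * Qᵀ) * Rτ * (Q * D * Qᵀ)⁻¹
      = Q * (Rτ * D * Rτ * D⁻¹) * Q⁻¹ := by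
    rw [Matrix.mul_inv_rev, Matrix.mul_inv_rev]
    simp only [mul_assoc]
    rw [e2, e1]
  rw [key, Matrix.trace_mul_cycle, ← mul_assoc, Matrix.nonsing_inv_mul _ hdQ, one_mul]

/-- The simplification step in the proof of Proposition 4.4: the trace computed
from `B` equals the trace computed from the simplified matrix `C`. -/
theorem trace_peripheral_simplification (r s t α β : ℝ)
    (B C : Matrix (Fin 3) (Fin 3) ℝ)
    (hB : B = NormedSpace.exp (r • p₀ + t • (R (β/2) * p₁ * R (-(β/2)))) *
        NormedSpace.exp (s • (R α * f₁ * R (-α))))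
    (hC : C = NormedSpace.exp (t • p₁) * R (α - β/2) * NormedSpace.exp (s • f₁)) :
    (R (2*π/3) * (B * Bᵀ) * R (2*π/3) * (B * Bᵀ)⁻¹).trace =
      (R (2*π/3) * (C * Cᵀ) * R (2*π/3) * (C * Cᵀ)⁻¹).trace := by
  -- rotation conjugation fixes r • p₀
  have hp : R (β/2) * (r • p₀) * R (-(β/2)) = r • p₀ := by
    rw [Matrix.mul_smul, Matrix.smul_mul, ← p₀_comm_R, mul_assoc, Rmul, add_neg_cancel,
      Rzero, mul_one]
  have hBarg : r • p₀ + t • (R (β/2) * p₁ * R (-(β/2)))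
      = R (β/2) * (r • p₀ + t • p₁) * R (-(β/2)) := by
    rw [Matrix.mul_add, Matrix.add_mul]
    congr 1
    · exact hp.symm
    · rw [Matrix.mul_smul, Matrix.smul_mul]
  -- split the first exponential
  have hcomm : Commute (r • p₀) (t • p₁) := (p₀_comm_p₁.smul_left r).smul_right t
  have hexp1 : NormedSpace.exp (r • p₀ + t • (R (β/2) * p₁ * R (-(β/2))))
      = R (β/2) * (NormedSpace.exp (r • p₀) * NormedSpace.exp (t • p₁)) * R (-(β/2)) := by
    rw [hBarg, ← Rinv, Matrix.exp_conj _ _ (RisUnit _),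
      Matrix.exp_add_of_commute _ _ hcomm]
  have hexp2 : NormedSpace.exp (s • (R α * f₁ * R (-α))) = R α * NormedSpace.exp (s • f₁) * R (-α) := by
    have : s • (R α * f₁ * R (-α)) = R α * (s • f₁) * R (-α) := by
      rw [Matrix.mul_smul, Matrix.smul_mul]
    rw [this, ← Rinv, Matrix.exp_conj _ _ (RisUnit _)]
  set Q := R (β/2) * NormedSpace.exp (r • p₀) with hQdef
  have hR2 : ∀ Z, R (-(β/2)) * (R α * Z) = R (α - β/2) * Z := fun Z => by
    rw [← mul_assoc, Rmul]; ring_nf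
  have hBQ : B = Q * C * R (-α) := by
    rw [hB, hexp1, hexp2, hC, hQdef]
    simp only [mul_assoc]
    rw [hR2]
  -- transpose of Q
  have hQT : Qᵀ = NormedSpace.exp (r • p₀) * R (-(β/2)) := by
    rw [hQdef, Matrix.transpose_mul, Rtranspose, ← Matrix.exp_transpose,
      Matrix.transpose_smul, p₀_transpose]
  have hBBt : B * Bᵀ = Q * (C * Cᵀ) * Qᵀ := by
    rw [hBQ, Matrix.transpose_mul, Matrix.transpose_mul, Rtranspose, neg_neg]
    simp only [mul_assoc]
    congr 2
    rw [← mul_assoc (R (-α)), Rmul, neg_add_cancel, Rzero, one_mul]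
  -- units
  have hEunit : IsUnit (NormedSpace.exp (r • p₀)) := by exact Matrix.isUnit_exp _
  have hQ : IsUnit Q := (RisUnit _).mul hEunit
  have hQt : IsUnit Qᵀ := by rw [hQT]; exact hEunit.mul (RisUnit _)
  -- the big rotation commutes with Q and Qᵀ
  have hcp : R (2*π/3) * (r • p₀) = (r • p₀) * R (2*π/3) := by
    rw [Matrix.mul_smul, Matrix.smul_mul, p₀_comm_R]
  have hce : R (2*π/3) * NormedSpace.exp (r • p₀) = NormedSpace.exp (r • p₀) * R (2*π/3) := by
    exact comm_exp (RisUnit _) hcp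
  have h1 : R (2*π/3) * Q = Q * R (2*π/3) := by
    rw [hQdef, ← mul_assoc, Rmul, add_comm, ← Rmul, mul_assoc, hce, mul_assoc]
  have h2 : R (2*π/3) * Qᵀ = Qᵀ * R (2*π/3) := by
    rw [hQT, ← mul_assoc, hce, mul_assoc, Rmul, add_comm, ← Rmul, ← mul_assoc]
  rw [hBBt]
  exact trace_key Q (R (2*π/3)) (C * Cᵀ) hQ hQt h1 h2
end

section
/- For all real numbers s and ϑ, one has 9·cosh²(2s) + 1 + 6·sin²(ϑ)·sinh⁴(s) > 6·(cosh(2s) + sin²(ϑ)·sinh⁴(s)); consequently there exists a unique t > 0 with cosh(2t) = (9·cosh²(2s) + 1 + 6·sin²(ϑ)·sinh⁴(s)) / (6·(cosh(2s) + sin²(ϑ)·sinh⁴(s))). Moreover, for s = 0 this unique solution is t = (log 3)/2. -/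
open Real

lemma cosh_unique (v : ℝ) (hv : 1 < v) :
    ∃! t : ℝ, 0 < t ∧ cosh (2*t) = v := by
  have hu : 0 < Real.sqrt (v^2 - 1) := Real.sqrt_pos.2 (by nlinarith)
  have hu2 : Real.sqrt (v^2 - 1) ^ 2 = v^2 - 1 := Real.sq_sqrt (by nlinarith)
  set u := Real.sqrt (v^2 - 1) with hudef
  have hx : 1 < v + u := by linarith
  have hlog : 0 < Real.log (v + u) := Real.log_pos hx
  have hinv : (v + u)⁻¹ = v - u := inv_eq_of_mul_eq_one_right (by nlinarith)
  have hval : cosh (2 * (Real.log (v + u) / 2)) = v := by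
    have h2 : 2 * (Real.log (v + u) / 2) = Real.log (v + u) := by ring
    rw [h2, Real.cosh_eq, Real.exp_log (by linarith), Real.exp_neg,
      Real.exp_log (by linarith), hinv]
    ring
  refine ⟨Real.log (v + u) / 2, ⟨by linarith, hval⟩, ?_⟩
  rintro t' ⟨ht', hct'⟩
  have heq : cosh (2 * t') = cosh (2 * (Real.log (v + u) / 2)) := by
    rw [hct', hval]
  have := Real.cosh_strictMonoOn.injOn
    (Set.mem_Ici.2 (by linarith : (0:ℝ) ≤ 2*t'))
    (Set.mem_Ici.2 (by linarith : (0:ℝ) ≤ 2 * (Real.log (v + u) / 2))) heq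
  linarith

/-- Proposition 4.6: for each `(s, ϑ)` there is a unique `t > 0` with
`cosh (2t)` equal to the prescribed value; for `s = 0` this solution is
`t = (log 3)/2`. -/
theorem exists_unique_t (s ϑ : ℝ) :
    9 * cosh (2*s)^2 + 1 + 6 * sin ϑ^2 * sinh s^4 >
      6 * (cosh (2*s) + sin ϑ^2 * sinh s^4) ∧
    (∃! t : ℝ, 0 < t ∧ cosh (2*t) =
      (9 * cosh (2*s)^2 + 1 + 6 * sin ϑ^2 * sinh s^4) /
        (6 * (cosh (2*s) + sin ϑ^2 * sinh s^4))) ∧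
    (s = 0 → 0 < Real.log 3 / 2 ∧ cosh (2 * (Real.log 3 / 2)) =
      (9 * cosh (2*s)^2 + 1 + 6 * sin ϑ^2 * sinh s^4) /
        (6 * (cosh (2*s) + sin ϑ^2 * sinh s^4))) := by
  have hc : 1 ≤ cosh (2*s) := Real.one_le_cosh _
  have hq : 0 ≤ sin ϑ^2 * sinh s^4 := by positivity
  have hineq : 9 * cosh (2*s)^2 + 1 + 6 * sin ϑ^2 * sinh s^4 >
      6 * (cosh (2*s) + sin ϑ^2 * sinh s^4) := by nlinarith
  have hden : 0 < 6 * (cosh (2*s) + sin ϑ^2 * sinh s^4) := by nlinarith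
  have hv : 1 < (9 * cosh (2*s)^2 + 1 + 6 * sin ϑ^2 * sinh s^4) /
      (6 * (cosh (2*s) + sin ϑ^2 * sinh s^4)) :=
    (one_lt_div hden).2 hineq
  refine ⟨hineq, cosh_unique _ hv, fun hs => ?_⟩
  have h3 : (0:ℝ) < Real.log 3 := Real.log_pos (by norm_num)
  refine ⟨by linarith, ?_⟩
  subst hs
  have h2 : 2 * (Real.log 3 / 2) = Real.log 3 := by ring
  rw [h2, Real.cosh_eq, Real.exp_log (by norm_num), Real.exp_neg,
    Real.exp_log (by norm_num)]
  norm_num [Real.cosh_zero, Real.sinh_zero]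
end

section
/- Let S = {A ∈ Matrix (Fin 3) (Fin 3) ℝ : Aᵀ = A and det A = 1}, equipped with the subspace topology. Then S has exactly two connected components, namely S₊ = {A ∈ S : A is positive definite} and S₋ = S ∖ S₊; that is, S₊ and S₋ are both nonempty, connected, and open in S. -/
open Matrix

/-- The set of symmetric real 3×3 matrices of determinant 1. -/
def symDetOne : Set (Matrix (Fin 3) (Fin 3) ℝ) := {A | Aᵀ = A ∧ A.det = 1}

/-- The subset of positive definite matrices in `symDetOne`. -/
def symDetOnePos : Set (Matrix (Fin 3) (Fin 3) ℝ) := {A | A ∈ symDetOne ∧ A.PosDef}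

namespace SymDetOneAux

abbrev Mat3 := Matrix (Fin 3) (Fin 3) ℝ

lemma herm_iff {A : Mat3} : A.IsHermitian ↔ Aᵀ = A := by
  rw [Matrix.IsHermitian, conjTranspose_eq_transpose_of_trivial]

lemma posDef_iff' {A : Mat3} :
    A.PosDef ↔ (Aᵀ = A ∧ ∀ x : Fin 3 → ℝ, x ≠ 0 → 0 < x ⬝ᵥ A *ᵥ x) := by
  rw [Matrix.posDef_iff_dotProduct_mulVec, herm_iff]; simp [star_trivial]

lemma posDef_smul {A : Mat3} (hA : A.PosDef) {c : ℝ} (hc : 0 < c) : (c • A).PosDef := by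
  rw [posDef_iff'] at hA ⊢
  refine ⟨by rw [transpose_smul, hA.1], fun x hx => ?_⟩
  rw [smul_mulVec, dotProduct_smul, smul_eq_mul]
  exact mul_pos hc (hA.2 x hx)

lemma posDef_mul_mul_transpose {G : Mat3} (hG : IsUnit G.det) {D : Mat3} (hD : D.PosDef) :
    (G * D * Gᵀ).PosDef := by
  rw [posDef_iff'] at hD ⊢
  refine ⟨by rw [transpose_mul, transpose_mul, transpose_transpose, hD.1, Matrix.mul_assoc],
    fun x hx => ?_⟩
  have hGT : IsUnit (Gᵀ).det := by rwa [det_transpose]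
  have hy : Gᵀ *ᵥ x ≠ 0 := by
    intro h
    apply hx
    have := congrArg (fun z => (Gᵀ)⁻¹ *ᵥ z) h
    simpa [mulVec_mulVec, Matrix.nonsing_inv_mul _ hGT] using this
  have key : x ⬝ᵥ (G * D * Gᵀ) *ᵥ x = (Gᵀ *ᵥ x) ⬝ᵥ D *ᵥ (Gᵀ *ᵥ x) := by
    rw [← mulVec_mulVec, ← mulVec_mulVec, dotProduct_mulVec, ← mulVec_transpose]
  rw [key]
  exact hD.2 _ hy

lemma isUnit_det_unitary (U : Matrix.unitaryGroup (Fin 3) ℝ) : IsUnit (U : Mat3).det := by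
  apply IsUnit.of_mul_eq_one ((star (U : Mat3)).det)
  rw [← det_mul, U.2.2, det_one]

lemma star_coe_unitary (U : Matrix.unitaryGroup (Fin 3) ℝ) : star (U : Mat3) = (U : Mat3)ᵀ := by
  rw [Matrix.star_eq_conjTranspose, conjTranspose_eq_transpose_of_trivial]

lemma posDef_of_eigenvalues_pos {A : Mat3} (hA : A.IsHermitian)
    (h : ∀ i, 0 < hA.eigenvalues i) : A.PosDef := by
  have hsp : A = (hA.eigenvectorUnitary : Mat3) * diagonal (hA.eigenvalues) *
      star (hA.eigenvectorUnitary : Mat3) := by simpa using hA.spectral_theorem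
  rw [hsp, star_coe_unitary]
  exact posDef_mul_mul_transpose (isUnit_det_unitary _)
    (Matrix.PosDef.diagonal (fun i => h i))

lemma posDef_of_nonneg {A : Mat3} (hs : Aᵀ = A) (hd : A.det = 1)
    (h : ∀ u : Fin 3 → ℝ, 0 ≤ u ⬝ᵥ A *ᵥ u) : A.PosDef := by
  have hherm : A.IsHermitian := herm_iff.mpr hs
  have hpsd : A.PosSemidef := PosSemidef.of_dotProduct_mulVec_nonneg hherm fun x => by simpa [star_trivial] using h x
  apply posDef_of_eigenvalues_pos hherm
  intro i
  rcases lt_or_eq_of_le (hpsd.eigenvalues_nonneg i) with h' | h'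
  · exact h'
  · exfalso
    have := hherm.det_eq_prod_eigenvalues
    rw [hd] at this
    have : (1 : ℝ) = ∏ j, hherm.eigenvalues j := by exact_mod_cast this
    rw [Finset.prod_eq_zero (Finset.mem_univ i) (by rw [← h'])] at this
    norm_num at this

lemma convex_posDef : Convex ℝ {A : Mat3 | A.PosDef} := by
  intro A hA B hB a b ha hb hab
  rcases eq_or_lt_of_le ha with ha0 | ha0
  · have hb1 : b = 1 := by linarith
    simpa [← ha0, hb1] using hB
  rcases eq_or_lt_of_le hb with hb0 | hb0
  · have ha1 : a = 1 := by linarith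
    simpa [← hb0, ha1] using hA
  exact (posDef_smul hA ha0).add (posDef_smul hB hb0)

noncomputable def normz (A : Mat3) : Mat3 := (A.det ^ (-(1/3) : ℝ)) • A

lemma cube_rpow {d : ℝ} (hd : 0 < d) : (d ^ (-(1/3) : ℝ)) ^ (3 : ℕ) * d = 1 := by
  rw [← Real.rpow_natCast (d ^ (-(1/3) : ℝ)) 3, ← Real.rpow_mul hd.le]
  norm_num
  rw [Real.rpow_neg_one]
  field_simp

lemma normz_image : normz '' {A : Mat3 | A.PosDef} = symDetOnePos := by
  ext B
  constructor
  · rintro ⟨A, hA, rfl⟩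
    have hd := hA.det_pos
    have hc : 0 < A.det ^ (-(1/3) : ℝ) := Real.rpow_pos_of_pos hd _
    have hpd : (normz A).PosDef := posDef_smul hA hc
    refine ⟨⟨herm_iff.mp hpd.1, ?_⟩, hpd⟩
    rw [normz, det_smul]
    simpa using cube_rpow hd
  · rintro ⟨⟨hs, hd⟩, hp⟩
    exact ⟨B, hp, by rw [normz, hd, Real.one_rpow, one_smul]⟩

lemma continuousOn_normz : ContinuousOn normz {A : Mat3 | A.PosDef} := by
  apply ContinuousOn.fun_smul _ continuousOn_id
  intro A hA
  exact ((Real.continuousAt_rpow_const _ _ (Or.inl hA.det_pos.ne')).comp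
    (continuous_id.matrix_det.continuousAt)).continuousWithinAt

lemma isConnected_posPart : IsConnected symDetOnePos := by
  rw [← normz_image]
  exact (convex_posDef.isConnected ⟨1, Matrix.PosDef.one⟩).image _ continuousOn_normz

lemma continuous_qf' (A : Mat3) : Continuous (fun u : Fin 3 → ℝ => u ⬝ᵥ A *ᵥ u) :=
  continuous_id.dotProduct (continuous_const.matrix_mulVec continuous_id)

lemma continuous_qf (u : Fin 3 → ℝ) : Continuous (fun B : Mat3 => u ⬝ᵥ B *ᵥ u) :=
  continuous_const.dotProduct (continuous_id.matrix_mulVec continuous_const)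

lemma isOpen_negPart : IsOpen {x : symDetOne | (x : Mat3) ∈ symDetOne \ symDetOnePos} := by
  have hset : {x : symDetOne | (x : Mat3) ∈ symDetOne \ symDetOnePos} =
      ⋃ u : Fin 3 → ℝ, {x : symDetOne | u ⬝ᵥ (x : Mat3) *ᵥ u < 0} := by
    ext ⟨B, hBs, hBd⟩
    simp only [Set.mem_setOf_eq, Set.mem_diff, Set.mem_iUnion]
    constructor
    · rintro ⟨-, hnp⟩
      by_contra hc
      push_neg at hc
      exact hnp ⟨⟨hBs, hBd⟩, posDef_of_nonneg hBs hBd hc⟩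
    · rintro ⟨u, hu⟩
      refine ⟨⟨hBs, hBd⟩, fun hp => ?_⟩
      have hu0 : u ≠ 0 := by
        rintro rfl
        simp at hu
      have := (posDef_iff'.mp hp.2).2 u hu0
      linarith
  rw [hset]
  exact isOpen_iUnion fun u =>
    isOpen_lt ((continuous_qf u).comp continuous_subtype_val) continuous_const

lemma posDef_of_sphere {B : Mat3} (hs : Bᵀ = B)
    (h : ∀ u : Fin 3 → ℝ, ‖u‖ = 1 → 0 < u ⬝ᵥ B *ᵥ u) : B.PosDef := by
  rw [posDef_iff']
  refine ⟨hs, fun x hx => ?_⟩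
  have hc : 0 < ‖x‖ := norm_pos_iff.mpr hx
  set u : Fin 3 → ℝ := ‖x‖⁻¹ • x with hu
  have hun : ‖u‖ = 1 := by
    rw [hu, norm_smul, norm_inv, norm_norm, inv_mul_cancel₀ hc.ne']
  have hxu : x = ‖x‖ • u := by
    rw [hu, smul_smul, mul_inv_cancel₀ hc.ne', one_smul]
  have key : x ⬝ᵥ B *ᵥ x = ‖x‖ * (‖x‖ * (u ⬝ᵥ B *ᵥ u)) := by
    conv_lhs => rw [hxu]
    rw [smul_dotProduct, mulVec_smul, dotProduct_smul, smul_eq_mul, smul_eq_mul]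
  rw [key]
  exact mul_pos hc (mul_pos hc (h u hun))

lemma qf_perturb {A B : Mat3} {m : ℝ}
    (hAB : ∀ i j, |B i j - A i j| < m / 9) {u : Fin 3 → ℝ} (hu : ‖u‖ = 1) :
    |u ⬝ᵥ (B - A) *ᵥ u| < m := by
  have hui : ∀ i, |u i| ≤ 1 := by
    intro i
    calc |u i| = ‖u i‖ := rfl
      _ ≤ ‖u‖ := norm_le_pi_norm u i
      _ = 1 := hu
  have expand : u ⬝ᵥ (B - A) *ᵥ u = ∑ i, ∑ j, u i * ((B - A) i j * u j) := by
    simp [dotProduct, mulVec, Finset.mul_sum]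
  rw [expand]
  have step1 : |∑ i, ∑ j, u i * ((B - A) i j * u j)| ≤
      ∑ i, ∑ j, |u i * ((B - A) i j * u j)| := by
    calc |∑ i, ∑ j, u i * ((B - A) i j * u j)| ≤ ∑ i, |∑ j, u i * ((B - A) i j * u j)| :=
          Finset.abs_sum_le_sum_abs _ _
      _ ≤ ∑ i, ∑ j, |u i * ((B - A) i j * u j)| :=
          Finset.sum_le_sum fun i _ => Finset.abs_sum_le_sum_abs _ _
  have step2 : ∀ i j, |u i * ((B - A) i j * u j)| < m / 9 := by
    intro i j
    have h1 : |u i * ((B - A) i j * u j)| = |u i| * (|(B - A) i j| * |u j|) := by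
      rw [abs_mul, abs_mul]
    have h2 := hAB i j
    rw [Matrix.sub_apply] at h1 ⊢
    calc |u i * ((B i j - A i j) * u j)| = |u i| * (|B i j - A i j| * |u j|) := h1
      _ ≤ 1 * (|B i j - A i j| * 1) := by
            apply mul_le_mul (hui i) (mul_le_mul le_rfl (hui j) (abs_nonneg _) (abs_nonneg _))
              (mul_nonneg (abs_nonneg _) (abs_nonneg _)) zero_le_one
      _ = |B i j - A i j| := by ring
      _ < m / 9 := h2
  have step3 : ∑ i, ∑ j, |u i * ((B - A) i j * u j)| < ∑ i : Fin 3, ∑ j : Fin 3, m / 9 :=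
    Finset.sum_lt_sum_of_nonempty Finset.univ_nonempty fun i _ =>
      Finset.sum_lt_sum_of_nonempty Finset.univ_nonempty fun j _ => step2 i j
  have step4 : ∑ i : Fin 3, ∑ j : Fin 3, m / 9 = m := by
    simp [Finset.sum_const]
    ring
  linarith [step1, step3.trans_eq step4]

lemma isOpen_posPart : IsOpen {x : symDetOne | (x : Mat3) ∈ symDetOnePos} := by
  rw [isOpen_iff_mem_nhds]
  rintro ⟨A, hAmem⟩ hA
  simp only [Set.mem_setOf_eq] at hA
  obtain ⟨u0, hu0s, hmin⟩ := (isCompact_sphere (0 : Fin 3 → ℝ) 1).exists_isMinOn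
    (NormedSpace.sphere_nonempty.mpr zero_le_one)
    ((continuous_qf' A).continuousOn)
  set m : ℝ := u0 ⬝ᵥ A *ᵥ u0 with hm_def
  have hu0n : ‖u0‖ = 1 := by simpa using hu0s
  have hu00 : u0 ≠ 0 := fun h => by simp [h] at hu0n
  have hm : 0 < m := (posDef_iff'.mp hA.2).2 u0 hu00
  set V : Set Mat3 := ⋂ p : Fin 3 × Fin 3, {B : Mat3 | |B p.1 p.2 - A p.1 p.2| < m / 9} with hV
  have hVopen : IsOpen V := isOpen_iInter_of_finite fun p =>
    isOpen_lt ((((continuous_id.matrix_elem p.1 p.2).sub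
      continuous_const).abs)) continuous_const
  have hAV : A ∈ V := by
    simp only [hV, Set.mem_iInter, Set.mem_setOf_eq]
    intro p
    simpa using by positivity
  refine Filter.mem_of_superset ((continuous_subtype_val.isOpen_preimage V hVopen).mem_nhds hAV) ?_
  rintro ⟨B, hBs, hBd⟩ hBV
  simp only [Set.mem_preimage, hV, Set.mem_iInter, Set.mem_setOf_eq] at hBV
  refine ⟨⟨hBs, hBd⟩, posDef_of_sphere hBs fun u hu => ?_⟩
  have hpert := qf_perturb (fun i j => hBV (i, j)) hu
  have hAq : m ≤ u ⬝ᵥ A *ᵥ u := hmin (by simpa using hu)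
  have hsplit : u ⬝ᵥ B *ᵥ u = u ⬝ᵥ A *ᵥ u + u ⬝ᵥ (B - A) *ᵥ u := by
    rw [Matrix.sub_mulVec, dotProduct_sub]
    ring
  rw [hsplit]
  have := abs_lt.mp hpert
  linarith

/-! ### Connectedness of the non-positive-definite part -/

noncomputable def refl3 (v : Fin 3 → ℝ) : Mat3 := (2 : ℝ) • vecMulVec v v - 1

def sphSet : Set (Fin 3 → ℝ) := {v | v ⬝ᵥ v = 1}

noncomputable def FF (p : Mat3 × (Fin 3 → ℝ)) : Mat3 :=
  ((p.1.det ^ 2) ^ (-(1/3) : ℝ)) • (p.1 * refl3 p.2 * p.1)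

lemma isConnected_sphSet : IsConnected sphSet := by
  have hrank : 1 < Module.rank ℝ (EuclideanSpace ℝ (Fin 3)) := by
    rw [← Module.finrank_eq_rank, finrank_euclideanSpace_fin]
    exact_mod_cast (by norm_num : (1:ℕ) < 3)
  have h : IsConnected (Metric.sphere (0 : EuclideanSpace ℝ (Fin 3)) 1) :=
    isConnected_sphere hrank 0 zero_le_one
  have himg := h.image (WithLp.equiv 2 (Fin 3 → ℝ)) (by
    exact (PiLp.continuous_ofLp 2 (fun _ : Fin 3 => ℝ)).continuousOn)
  convert himg using 1
  ext v
  simp only [sphSet, Set.mem_setOf_eq, Set.mem_image, mem_sphere_zero_iff_norm]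
  constructor
  · intro hv
    refine ⟨(WithLp.equiv 2 (Fin 3 → ℝ)).symm v, ?_, rfl⟩
    rw [EuclideanSpace.norm_eq]
    have : ∀ i, ‖((WithLp.equiv 2 (Fin 3 → ℝ)).symm v) i‖ = |v i| := fun i => rfl
    simp only [this]
    rw [show (∑ i, |v i| ^ 2) = v ⬝ᵥ v by simp [dotProduct, sq_abs, sq]]
    rw [hv, Real.sqrt_one]
  · rintro ⟨x, hx, rfl⟩
    rw [EuclideanSpace.norm_eq] at hx
    have h2 : (∑ i, ‖x i‖ ^ 2) = (WithLp.equiv 2 (Fin 3 → ℝ)) x ⬝ᵥ (WithLp.equiv 2 (Fin 3 → ℝ)) x := by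
      simp [dotProduct, sq_abs, sq]
    have h3 := Real.sqrt_eq_one.mp hx
    rw [h2] at h3
    exact h3

lemma refl3_transpose (v : Fin 3 → ℝ) : (refl3 v)ᵀ = refl3 v := by
  ext i j
  simp [refl3, vecMulVec_apply, Matrix.one_apply, mul_comm, eq_comm]

lemma refl3_det {v : Fin 3 → ℝ} (hv : v ⬝ᵥ v = 1) : (refl3 v).det = 1 := by
  have hv' : v 0 * v 0 + v 1 * v 1 + v 2 * v 2 = 1 := by
    simpa [dotProduct, Fin.sum_univ_three] using hv
  rw [refl3, det_fin_three]
  simp only [Matrix.sub_apply, Matrix.smul_apply, vecMulVec_apply, Matrix.one_apply,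
    smul_eq_mul]
  norm_num [Fin.ext_iff]
  linear_combination 2 * hv'

lemma exists_orth {v : Fin 3 → ℝ} (hv : v ⬝ᵥ v = 1) :
    ∃ u : Fin 3 → ℝ, u ≠ 0 ∧ v ⬝ᵥ u = 0 := by
  have hv' : v 0 * v 0 + v 1 * v 1 + v 2 * v 2 = 1 := by
    simpa [dotProduct, Fin.sum_univ_three] using hv
  have : ∃ i, v i * v i ≠ 1 := by
    by_contra hc
    push_neg at hc
    have h0 := hc 0; have h1 := hc 1; have h2 := hc 2
    nlinarith
  obtain ⟨i, hi⟩ := this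
  refine ⟨Pi.single i 1 - v i • v, ?_, ?_⟩
  · intro h
    have := congrFun h i
    simp [Pi.single_apply] at this
    exact hi (by linarith)
  · rw [dotProduct_sub, dotProduct_single, dotProduct_smul, hv, smul_eq_mul]
    ring

lemma refl3_mulVec_orth {v u : Fin 3 → ℝ} (hvu : v ⬝ᵥ u = 0) :
    refl3 v *ᵥ u = -u := by
  funext i
  simp only [refl3, Matrix.sub_mulVec, Matrix.smul_mulVec, Pi.sub_apply, Pi.smul_apply,
    Matrix.one_mulVec, smul_eq_mul]
  have : vecMulVec v v *ᵥ u = (v ⬝ᵥ u) • v := by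
    funext k
    simp [vecMulVec_apply, mulVec, dotProduct, Finset.mul_sum, Finset.sum_mul, mul_comm,
      mul_assoc, Pi.smul_apply, smul_eq_mul]
    apply Finset.sum_congr rfl
    intro j _
    ring
  rw [this, hvu, zero_smul]
  simp

lemma dotProduct_self_pos {u : Fin 3 → ℝ} (hu : u ≠ 0) : 0 < u ⬝ᵥ u := by
  have hnn : 0 ≤ u ⬝ᵥ u := Finset.sum_nonneg fun i _ => mul_self_nonneg (u i)
  have hne : u ⬝ᵥ u ≠ 0 := fun h => hu ((dotProduct_self_eq_zero (v := u)).mp h)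
  exact lt_of_le_of_ne hnn (Ne.symm hne)

lemma FF_forward {B : Mat3} (hB : B.PosDef) {v : Fin 3 → ℝ} (hv : v ∈ sphSet) :
    FF (B, v) ∈ symDetOne \ symDetOnePos := by
  have hdB : 0 < B.det := hB.det_pos
  have hd2 : 0 < B.det ^ 2 := by positivity
  have hc : 0 < (B.det ^ 2) ^ (-(1/3) : ℝ) := Real.rpow_pos_of_pos hd2 _
  have hBs : Bᵀ = B := (posDef_iff'.mp hB).1
  have hsym : (FF (B, v))ᵀ = FF (B, v) := by
    rw [FF, transpose_smul, transpose_mul, transpose_mul, refl3_transpose, hBs,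
      Matrix.mul_assoc]
  have hdet : (FF (B, v)).det = 1 := by
    rw [FF, det_smul]
    simp only [Fintype.card_fin]
    rw [det_mul, det_mul, refl3_det hv]
    have := cube_rpow hd2
    nlinarith [this]
  obtain ⟨u, hu0, hvu⟩ := exists_orth hv
  have hBu : IsUnit B.det := (isUnit_iff_ne_zero).mpr hdB.ne'
  set w : Fin 3 → ℝ := B⁻¹ *ᵥ u with hw
  have hBw : B *ᵥ w = u := by
    rw [hw, mulVec_mulVec, Matrix.mul_nonsing_inv _ hBu, one_mulVec]
  have hw0 : w ≠ 0 := by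
    intro h
    rw [h, mulVec_zero] at hBw
    exact hu0 hBw.symm
  have hneg : w ⬝ᵥ (FF (B, v)) *ᵥ w < 0 := by
    have hq : w ⬝ᵥ (B * refl3 v * B) *ᵥ w = -(u ⬝ᵥ u) := by
      rw [← mulVec_mulVec, ← mulVec_mulVec, hBw, refl3_mulVec_orth hvu,
        dotProduct_mulVec, ← mulVec_transpose, hBs, hBw]
      simp [dotProduct_neg]
    rw [FF, smul_mulVec, dotProduct_smul, smul_eq_mul, hq]
    have := dotProduct_self_pos hu0
    nlinarith
  refine ⟨⟨hsym, hdet⟩, fun hmem => ?_⟩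
  have := (posDef_iff'.mp hmem.2).2 w hw0
  linarith

lemma exists_unique_pos {μ : Fin 3 → ℝ} (hprod : μ 0 * μ 1 * μ 2 = 1)
    (hnot : ¬ ∀ i, 0 < μ i) : ∃ i0, 0 < μ i0 ∧ ∀ j, j ≠ i0 → μ j < 0 := by
  rcases lt_trichotomy (μ 0) 0 with h0|h0|h0 <;>
  rcases lt_trichotomy (μ 1) 0 with h1|h1|h1 <;>
  rcases lt_trichotomy (μ 2) 0 with h2|h2|h2 <;>
  first
  | (refine absurd (fun i => ?_) hnot; fin_cases i <;> simp_all; done)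
  | (refine ⟨0, h0, fun j hj => ?_⟩; fin_cases j <;> simp_all; done)
  | (refine ⟨1, h1, fun j hj => ?_⟩; fin_cases j <;> simp_all; done)
  | (refine ⟨2, h2, fun j hj => ?_⟩; fin_cases j <;> simp_all; done)
  | (exfalso; simp_all; done)
  | (exfalso; nlinarith [hprod, mul_pos h0 h1])
  | (exfalso; nlinarith [hprod, mul_pos h0 h2])
  | (exfalso; nlinarith [hprod, mul_pos h1 h2])
  | (exfalso; nlinarith [hprod, mul_pos (neg_pos.2 h0) (neg_pos.2 h1)])
  | (exfalso; nlinarith [hprod, mul_pos (neg_pos.2 h0) (neg_pos.2 h2)])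
  | (exfalso; nlinarith [hprod, mul_pos (neg_pos.2 h1) (neg_pos.2 h2)])

lemma neg_part_subset_image {A : Mat3} (hmem : A ∈ symDetOne \ symDetOnePos) :
    A ∈ FF '' ({M : Mat3 | M.PosDef} ×ˢ sphSet) := by
  obtain ⟨⟨hs, hd⟩, hnp⟩ := hmem
  have hnpd : ¬A.PosDef := fun h => hnp ⟨⟨hs, hd⟩, h⟩
  have hherm : A.IsHermitian := herm_iff.mpr hs
  set U : Mat3 := (hherm.eigenvectorUnitary : Mat3) with hU
  set μ : Fin 3 → ℝ := hherm.eigenvalues with hμ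
  have hUU : star U * U = 1 := hherm.eigenvectorUnitary.2.1
  have hUUt : U * star U = 1 := hherm.eigenvectorUnitary.2.2
  have hsp : A = U * diagonal μ * star U := by simpa using hherm.spectral_theorem
  have hprodμ : μ 0 * μ 1 * μ 2 = 1 := by
    have h1 : A.det = ∏ i, μ i := by
      have := hherm.det_eq_prod_eigenvalues
      exact_mod_cast this
    rw [hd] at h1
    rw [Fin.prod_univ_three] at h1
    exact h1.symm
  have hnotall : ¬ ∀ i, 0 < μ i := fun h => hnpd (posDef_of_eigenvalues_pos hherm h)
  obtain ⟨i0, hpos, hneg⟩ := exists_unique_pos hprodμ hnotall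
  have hμne : ∀ i, μ i ≠ 0 := by
    intro i
    by_cases hi : i = i0
    · rw [hi]; exact hpos.ne'
    · exact (hneg i hi).ne
  set d : Fin 3 → ℝ := fun i => Real.sqrt |μ i| with hdd
  have hd_pos : ∀ i, 0 < d i := fun i => Real.sqrt_pos.2 (abs_pos.2 (hμne i))
  set s : Fin 3 → ℝ := fun i => if i = i0 then 1 else -1 with hss
  set B : Mat3 := U * diagonal d * star U with hB
  have hBpd : B.PosDef := by
    rw [hB, star_coe_unitary]
    exact posDef_mul_mul_transpose (isUnit_det_unitary _) (Matrix.PosDef.diagonal hd_pos)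
  set v : Fin 3 → ℝ := fun k => U k i0 with hv
  have hvs : v ⬝ᵥ v = 1 := by
    have h1 : (star U * U) i0 i0 = (1 : Mat3) i0 i0 := by rw [hUU]
    simp only [Matrix.mul_apply, Matrix.star_apply, star_trivial, Matrix.one_apply_eq] at h1
    simpa [dotProduct, hv, mul_comm] using h1
  have key : refl3 v = U * diagonal s * star U := by
    ext k l
    have h1 : (U * diagonal s * star U) k l = ∑ j, U k j * s j * U l j := by
      rw [Matrix.mul_apply]
      apply Finset.sum_congr rfl
      intro j _
      rw [Matrix.mul_diagonal, Matrix.star_apply, star_trivial]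
    rw [h1]
    have h2 : ∀ j, U k j * s j * U l j =
        2 * ((if j = i0 then U k j * U l j else 0)) - U k j * U l j := by
      intro j
      by_cases hj : j = i0 <;> simp [hss, hj] <;> ring
    rw [Finset.sum_congr rfl (fun j _ => h2 j), Finset.sum_sub_distrib]
    have h3 : (∑ x, (2 * if x = i0 then U k x * U l x else 0)) = 2 * (U k i0 * U l i0) := by
      rw [← Finset.mul_sum]
      rw [Finset.sum_ite_eq' Finset.univ i0 (fun x => U k x * U l x)]
      simp
    have h4 : (∑ x, U k x * U l x) = (1 : Mat3) k l := by
      rw [← hUUt, Matrix.mul_apply]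
      apply Finset.sum_congr rfl
      intro j _
      rw [Matrix.star_apply, star_trivial]
    rw [h3, h4]
    simp only [refl3, Matrix.sub_apply, Matrix.smul_apply, vecMulVec_apply, smul_eq_mul, hv]
  have cancel : ∀ X : Mat3, star U * (U * X) = X := fun X => by
    rw [← Matrix.mul_assoc, hUU, Matrix.one_mul]
  have hfun : d * (s * d) = μ := by
    funext i
    simp only [Pi.mul_apply, hdd, hss]
    by_cases hi : i = i0
    · rw [if_pos hi, one_mul, Real.mul_self_sqrt (abs_nonneg _), hi, abs_of_pos hpos]
    · rw [if_neg hi, neg_one_mul, mul_neg, Real.mul_self_sqrt (abs_nonneg _),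
        abs_of_neg (hneg i hi), neg_neg]
  have hdiag3 : diagonal d * (diagonal s * (diagonal d * star U)) = diagonal μ * star U := by
    rw [← Matrix.mul_assoc (diagonal s), Matrix.diagonal_mul_diagonal, ← Matrix.mul_assoc,
      Matrix.diagonal_mul_diagonal, ← hfun]
    rfl
  have hmid : B * refl3 v * B = A := by
    have step1 : B * refl3 v * B = U * (diagonal d * (diagonal s * (diagonal d * star U))) := by
      rw [key, hB]
      simp only [Matrix.mul_assoc, cancel]
    rw [step1, hdiag3, ← Matrix.mul_assoc, ← hsp]
  have h2det : U.det * (star U).det = 1 := by rw [← Matrix.det_mul, hUUt, Matrix.det_one]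
  have hdetB : B.det = d 0 * d 1 * d 2 := by
    rw [hB, Matrix.det_mul, Matrix.det_mul, Matrix.det_diagonal, Fin.prod_univ_three]
    linear_combination (d 0 * d 1 * d 2) * h2det
  have habs : ∀ i : Fin 3, d i * d i = |μ i| := fun i => Real.mul_self_sqrt (abs_nonneg _)
  have hdet2 : B.det ^ 2 = 1 := by
    rw [hdetB]
    calc (d 0 * d 1 * d 2) ^ 2 = (d 0 * d 0) * (d 1 * d 1) * (d 2 * d 2) := by ring
      _ = |μ 0| * |μ 1| * |μ 2| := by rw [habs 0, habs 1, habs 2]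
      _ = |μ 0 * μ 1 * μ 2| := by rw [abs_mul, abs_mul]
      _ = 1 := by rw [hprodμ]; exact abs_one
  refine ⟨(B, v), ⟨hBpd, hvs⟩, ?_⟩
  show FF (B, v) = A
  rw [FF]
  simp only
  rw [hdet2, Real.one_rpow, one_smul, hmid]

lemma continuous_refl3 : Continuous refl3 := by
  apply Continuous.sub _ continuous_const
  apply Continuous.fun_const_smul
  exact continuous_matrix fun i j =>
    ((continuous_apply i).mul (continuous_apply j))

lemma continuousOn_FF : ContinuousOn FF ({M : Mat3 | M.PosDef} ×ˢ sphSet) := by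
  apply ContinuousOn.fun_smul
  · intro p hp
    have hdet : 0 < p.1.det ^ 2 := by
      have := (hp.1 : p.1.PosDef).det_pos
      positivity
    have h1 : ContinuousAt (fun d : ℝ => d ^ (-(1/3) : ℝ)) (p.1.det ^ 2) :=
      Real.continuousAt_rpow_const _ _ (Or.inl hdet.ne')
    have h2 : ContinuousAt (fun q : Mat3 × (Fin 3 → ℝ) => q.1.det ^ 2) p :=
      ((continuous_fst.matrix_det).pow 2).continuousAt
    exact (ContinuousAt.comp (x := p) h1 h2).continuousWithinAt
  · exact ((continuous_fst.matrix_mul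
      (continuous_refl3.comp continuous_snd)).matrix_mul continuous_fst).continuousOn

lemma isConnected_negPart : IsConnected (symDetOne \ symDetOnePos) := by
  have hdom : IsConnected ({M : Mat3 | M.PosDef} ×ˢ sphSet) :=
    (convex_posDef.isConnected ⟨1, Matrix.PosDef.one⟩).prod isConnected_sphSet
  have himg : FF '' ({M : Mat3 | M.PosDef} ×ˢ sphSet) = symDetOne \ symDetOnePos := by
    apply Set.Subset.antisymm
    · rintro X ⟨⟨B, v⟩, ⟨hB, hv⟩, rfl⟩
      exact FF_forward hB hv
    · intro A hA
      exact neg_part_subset_image hA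
  rw [← himg]
  exact hdom.image FF continuousOn_FF

lemma nonempty_pos : symDetOnePos.Nonempty :=
  ⟨1, ⟨transpose_one, det_one⟩, Matrix.PosDef.one⟩

lemma nonempty_neg : (symDetOne \ symDetOnePos).Nonempty := by
  refine ⟨diagonal ![1, -1, -1], ⟨?_, ?_⟩, ?_⟩
  · rw [diagonal_transpose]
  · rw [det_diagonal, Fin.prod_univ_three]
    norm_num
    simp
  · rintro ⟨-, hp⟩
    have hx : (Pi.single 1 1 : Fin 3 → ℝ) ≠ 0 := by
      intro h
      have := congrFun h 1
      simp at this
    have := (posDef_iff'.mp hp).2 (Pi.single 1 1) hx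
    have hval : (Pi.single 1 1 : Fin 3 → ℝ) ⬝ᵥ (diagonal ![1, -1, -1]) *ᵥ Pi.single 1 1
        = -1 := by
      simp [dotProduct, mulVec, diagonal, Pi.single_apply, Fin.sum_univ_three]
    rw [hval] at this
    linarith

end SymDetOneAux

open SymDetOneAux in
/-- Lemma 2.2: the space of symmetric matrices in `SL₃(ℝ)` has exactly two
connected components: the positive definite ones, and the rest. Both are
nonempty, connected, and open in the subspace topology of `symDetOne`. -/
theorem symDetOne_two_components :
    symDetOnePos.Nonempty ∧ (symDetOne \ symDetOnePos).Nonempty ∧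
    IsConnected symDetOnePos ∧ IsConnected (symDetOne \ symDetOnePos) ∧
    IsOpen {x : symDetOne | (x : Matrix (Fin 3) (Fin 3) ℝ) ∈ symDetOnePos} ∧
    IsOpen {x : symDetOne | (x : Matrix (Fin 3) (Fin 3) ℝ) ∈ symDetOne \ symDetOnePos} :=
  ⟨nonempty_pos, nonempty_neg, isConnected_posPart, isConnected_negPart,
    isOpen_posPart, isOpen_negPart⟩
end

section
/- Let θ ∈ ℝ with sin θ ≠ 0, and let P ∈ Matrix (Fin 3) (Fin 3) ℝ be symmetric, positive definite, with det P = 1. Then R_θ · P · R_θᵀ = P if and only if there exists t ∈ ℝ such that P = diag(e^{2t}, e^{−t}, e^{−t}). -/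
open Matrix

/-- The fixed point set of the rotation `R_θ` acting on the symmetric space
`X ≅ 𝒫` of symmetric positive definite matrices of determinant 1 is the
singular line `t ↦ diag(e^{2t}, e^{-t}, e^{-t})`. -/
theorem fixed_points_of_rotation (θ : ℝ) (hθ : Real.sin θ ≠ 0)
    (P : Matrix (Fin 3) (Fin 3) ℝ) (hsym : Pᵀ = P) (hpd : P.PosDef)
    (hdet : P.det = 1) :
    R θ * P * (R θ)ᵀ = P ↔
    ∃ t : ℝ, P = Matrix.diagonal ![Real.exp (2*t), Real.exp (-t), Real.exp (-t)] := by
  have hsc : Real.sin θ ^ 2 + Real.cos θ ^ 2 = 1 := Real.sin_sq_add_cos_sq θ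
  have hs2 : (0:ℝ) < Real.sin θ ^ 2 := by positivity
  constructor
  · intro h
    have h10 : P 1 0 = P 0 1 := by
      have := congrFun (congrFun hsym 0) 1; rwa [Matrix.transpose_apply] at this
    have h20 : P 2 0 = P 0 2 := by
      have := congrFun (congrFun hsym 0) 2; rwa [Matrix.transpose_apply] at this
    have h21 : P 2 1 = P 1 2 := by
      have := congrFun (congrFun hsym 1) 2; rwa [Matrix.transpose_apply] at this
    have e01 := congrFun (congrFun h 0) 1
    have e02 := congrFun (congrFun h 0) 2
    have e11 := congrFun (congrFun h 1) 1
    have e12 := congrFun (congrFun h 1) 2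
    simp only [R, Matrix.mul_apply, Matrix.transpose_apply, Fin.sum_univ_three,
      Matrix.cons_val', Matrix.cons_val_zero, Matrix.cons_val_one, Matrix.head_cons,
      Matrix.empty_val', Matrix.cons_val_fin_one, Matrix.head_fin_const,
      Matrix.cons_val_two, Matrix.tail_cons, Matrix.of_apply] at e01 e02 e11 e12
    rw [h10, h20, h21] at e01 e02 e11 e12
    have key1 : (Real.sin θ ^ 2 + (1 - Real.cos θ) ^ 2) * P 0 1 = 0 := by
      linear_combination Real.sin θ * e02 - (1 - Real.cos θ) * e01
    have hfac : (0:ℝ) < Real.sin θ ^ 2 + (1 - Real.cos θ) ^ 2 := by positivity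
    have hp01 : P 0 1 = 0 := by
      rcases mul_eq_zero.mp key1 with h' | h'
      · exact absurd h' hfac.ne'
      · exact h'
    have key2 : Real.sin θ * P 0 2 = 0 := by linear_combination -e01 + (Real.cos θ - 1) * hp01
    have hp02 : P 0 2 = 0 := by
      rcases mul_eq_zero.mp key2 with h' | h'
      · exact absurd h' hθ
      · exact h'
    have key3 : Real.sin θ * P 1 2 = 0 := by
      linear_combination (-(Real.cos θ)/2) * e11 + (-(Real.sin θ)/2) * e12
        + ((Real.cos θ * P 1 1 - Real.sin θ * P 1 2)/2) * hsc
    have hp12 : P 1 2 = 0 := by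
      rcases mul_eq_zero.mp key3 with h' | h'
      · exact absurd h' hθ
      · exact h'
    have key4 : Real.sin θ ^ 2 * (P 2 2 - P 1 1) = 0 := by
      linear_combination e11 - P 1 1 * hsc + 2 * Real.cos θ * Real.sin θ * hp12
    have heq : P 2 2 = P 1 1 := by
      rcases mul_eq_zero.mp key4 with h' | h'
      · exact absurd h' hs2.ne'
      · linarith
    have hne : (Pi.single 1 1 : Fin 3 → ℝ) ≠ 0 := by
      intro h0
      simpa using congrFun h0 1
    have hp11 : 0 < P 1 1 := by
      have := hpd.dotProduct_mulVec_pos (x := Pi.single 1 1) hne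
      simpa [Matrix.mulVec, dotProduct, Fin.sum_univ_three, Pi.single_apply] using this
    have hdet' : P 0 0 * (P 1 1 * P 1 1) = 1 := by
      rw [Matrix.det_fin_three, h10, h20, h21, hp01, hp02, hp12, heq] at hdet
      linear_combination hdet
    refine ⟨-Real.log (P 1 1), ?_⟩
    have hep : Real.exp (-(-Real.log (P 1 1))) = P 1 1 := by
      rw [neg_neg, Real.exp_log hp11]
    have hea : Real.exp (2 * -Real.log (P 1 1)) = P 0 0 := by
      have h1 : Real.exp (2 * -Real.log (P 1 1))
          = (Real.exp (Real.log (P 1 1)))⁻¹ * (Real.exp (Real.log (P 1 1)))⁻¹ := by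
        rw [two_mul, Real.exp_add, Real.exp_neg]
      rw [h1, Real.exp_log hp11]
      field_simp
      linear_combination -hdet'
    have hPd : P = Matrix.diagonal ![P 0 0, P 1 1, P 1 1] := by
      ext i j
      fin_cases i <;> fin_cases j <;>
        simp [Matrix.diagonal, hp01, hp02, hp12, h10, h20, h21, heq]
    rw [hPd]
    refine congrArg Matrix.diagonal ?_
    funext i
    fin_cases i
    · simpa using hea.symm
    · simpa using hep.symm
    · simpa using hep.symm
  · rintro ⟨t, rfl⟩
    have hD : Matrix.diagonal ![Real.exp (2*t), Real.exp (-t), Real.exp (-t)]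
        = !![Real.exp (2*t), 0, 0; 0, Real.exp (-t), 0; 0, 0, Real.exp (-t)] := by
      ext i j
      fin_cases i <;> fin_cases j <;> simp [Matrix.diagonal, Matrix.vecHead, Matrix.vecTail]
    rw [hD]
    ext i j
    fin_cases i <;> fin_cases j <;>
      simp [R, Matrix.mul_apply, Matrix.transpose_apply, Fin.sum_univ_three,
        Matrix.vecHead, Matrix.vecTail] <;>
      first
      | linear_combination Real.exp (-t) * hsc
      | ring
end

section
/- Let G be a group and ρ : G → Matrix (Fin 3) (Fin 3) ℝ a map such that every ρ(g) is invertible and ρ is multiplicative (a representation into GL₃(ℝ)). Then there exists an ℝ-submodule W of (Fin 3 → ℝ) with W ≠ ⊥, W ≠ ⊤, and (ρ g).mulVec v ∈ W for all g ∈ G and v ∈ W, if and only if there exists a ℂ-submodule V of (Fin 3 → ℂ) with V ≠ ⊥, V ≠ ⊤, and ((ρ g).map (algebraMap ℝ ℂ)).mulVec v ∈ V for all g ∈ G and v ∈ V. In other words, the representation is ℝ-irreducible if and only if it is ℂ-irreducible. -/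
open Matrix

noncomputable section

noncomputable section

private def cplx : (Fin 3 → ℝ) →ₗ[ℝ] (Fin 3 → ℂ) where
  toFun w := fun i => (w i : ℂ)
  map_add' x y := by funext i; simp
  map_smul' a x := by funext i; simp [Complex.ofReal_mul]

private lemma mulVec_cplx (M : Matrix (Fin 3) (Fin 3) ℝ) (w : Fin 3 → ℝ) :
    (M.map (algebraMap ℝ ℂ)).mulVec (cplx w) = cplx (M.mulVec w) := by
  funext i
  simp [cplx, Matrix.mulVec, dotProduct, Matrix.map_apply]

private lemma star_mulVec_real (M : Matrix (Fin 3) (Fin 3) ℝ) (v : Fin 3 → ℂ) :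
    star ((M.map (algebraMap ℝ ℂ)).mulVec v) = (M.map (algebraMap ℝ ℂ)).mulVec (star v) := by
  funext i
  simp [Matrix.mulVec, dotProduct, Matrix.map_apply, Pi.star_apply, star_sum]

private def conjSub (V : Submodule ℂ (Fin 3 → ℂ)) : Submodule ℂ (Fin 3 → ℂ) where
  carrier := {v | star v ∈ V}
  add_mem' := by
    intro a b ha hb
    simp only [Set.mem_setOf_eq, star_add] at *
    exact V.add_mem ha hb
  zero_mem' := by simp
  smul_mem' := by
    intro c v hv
    simp only [Set.mem_setOf_eq, star_smul] at *
    exact V.smul_mem _ hv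

private lemma mem_conjSub {V : Submodule ℂ (Fin 3 → ℂ)} {v : Fin 3 → ℂ} :
    v ∈ conjSub V ↔ star v ∈ V := Iff.rfl

private def starEquiv (V : Submodule ℂ (Fin 3 → ℂ)) : V ≃ₗ[ℝ] conjSub V where
  toFun x := ⟨star x.1, by simp [mem_conjSub, x.2]⟩
  invFun x := ⟨star x.1, x.2⟩
  left_inv x := by simp
  right_inv x := by simp
  map_add' x y := by simp
  map_smul' a x := by
    ext i
    simp

private lemma finrank_conjSub (V : Submodule ℂ (Fin 3 → ℂ)) :
    Module.finrank ℂ (conjSub V) = Module.finrank ℂ V := by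
  haveI : FiniteDimensional ℝ V := Module.Finite.trans ℂ V
  haveI : FiniteDimensional ℝ (conjSub V) := Module.Finite.trans ℂ (conjSub V)
  have h1 : Module.finrank ℝ ℂ * Module.finrank ℂ V = Module.finrank ℝ V :=
    Module.finrank_mul_finrank ℝ ℂ V
  have h2 : Module.finrank ℝ ℂ * Module.finrank ℂ (conjSub V) = Module.finrank ℝ (conjSub V) :=
    Module.finrank_mul_finrank ℝ ℂ (conjSub V)
  have h3 : Module.finrank ℝ V = Module.finrank ℝ (conjSub V) := (starEquiv V).finrank_eq
  have h4 : Module.finrank ℝ ℂ = 2 := Complex.finrank_real_complex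
  rw [h4] at h1 h2
  omega

private lemma ofStable (G : Type*) (ρ : G → Matrix (Fin 3) (Fin 3) ℝ)
    (U : Submodule ℂ (Fin 3 → ℂ)) (h0 : U ≠ ⊥) (ht : U ≠ ⊤)
    (hstar : ∀ v ∈ U, star v ∈ U)
    (hinv : ∀ g : G, ∀ v ∈ U, ((ρ g).map (algebraMap ℝ ℂ)).mulVec v ∈ U) :
    (∃ W : Submodule ℝ (Fin 3 → ℝ), W ≠ ⊥ ∧ W ≠ ⊤ ∧
      ∀ g : G, ∀ v ∈ W, (ρ g).mulVec v ∈ W) := by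
  refine ⟨(U.restrictScalars ℝ).comap cplx, ?_, ?_, ?_⟩
  · -- nonzero
    obtain ⟨v, hvU, hv0⟩ := Submodule.exists_mem_ne_zero_of_ne_bot h0
    have hre : cplx (fun i => (v i).re) ∈ U := by
      have : cplx (fun i => (v i).re) = ((1:ℂ)/2) • (v + star v) := by
        funext i
        simp [cplx, Complex.ext_iff]
        ring
      rw [this]
      exact U.smul_mem _ (U.add_mem hvU (hstar v hvU))
    have him : cplx (fun i => (v i).im) ∈ U := by
      have : cplx (fun i => (v i).im) = (-(Complex.I)/2) • (v - star v) := by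
        funext i
        simp [cplx, Complex.ext_iff]
        ring_nf
      rw [this]
      exact U.smul_mem _ (U.sub_mem hvU (hstar v hvU))
    intro hbot
    have hz : ∀ w : Fin 3 → ℝ, cplx w ∈ U → w = 0 := by
      intro w hw
      have : w ∈ (⊥ : Submodule ℝ (Fin 3 → ℝ)) := hbot ▸ (by exact hw)
      simpa using this
    apply hv0
    have h1 := hz _ hre
    have h2 := hz _ him
    funext i
    have e1 := congrFun h1 i
    have e2 := congrFun h2 i
    simp only [Pi.zero_apply] at e1 e2 ⊢
    exact Complex.ext e1 e2
  · -- proper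
    intro htop
    apply ht
    rw [Submodule.eq_top_iff']
    intro v
    have hall : ∀ w : Fin 3 → ℝ, cplx w ∈ U := by
      intro w
      have : w ∈ ((U.restrictScalars ℝ).comap cplx) := htop ▸ Submodule.mem_top
      exact this
    have : v = cplx (fun i => (v i).re) + Complex.I • cplx (fun i => (v i).im) := by
      funext i
      simp [cplx, Complex.ext_iff]
    rw [this]
    exact U.add_mem (hall _) (U.smul_mem _ (hall _))
  · -- invariant
    intro g w hw
    have : cplx ((ρ g).mulVec w) ∈ U := by
      rw [← mulVec_cplx]
      exact hinv g _ hw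
    exact this

private lemma forward (G : Type*) (ρ : G → Matrix (Fin 3) (Fin 3) ℝ)
    (W : Submodule ℝ (Fin 3 → ℝ)) (h0 : W ≠ ⊥) (ht : W ≠ ⊤)
    (hW : ∀ g : G, ∀ v ∈ W, (ρ g).mulVec v ∈ W) :
    (∃ V : Submodule ℂ (Fin 3 → ℂ), V ≠ ⊥ ∧ V ≠ ⊤ ∧
      ∀ g : G, ∀ v ∈ V, ((ρ g).map (algebraMap ℝ ℂ)).mulVec v ∈ V) := by
  refine ⟨Submodule.span ℂ (cplx '' W), ?_, ?_, ?_⟩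
  · -- nonzero
    obtain ⟨w, hwW, hw0⟩ := Submodule.exists_mem_ne_zero_of_ne_bot h0
    intro hbot
    have : cplx w ∈ Submodule.span ℂ (cplx '' W) :=
      Submodule.subset_span ⟨w, hwW, rfl⟩
    rw [hbot, Submodule.mem_bot] at this
    apply hw0
    funext i
    have := congrFun this i
    simpa [cplx] using this
  · -- proper
    have key : ∀ v ∈ Submodule.span ℂ (cplx '' W),
        (fun i => (v i).re) ∈ W ∧ (fun i => (v i).im) ∈ W := by
      intro v hv
      induction hv using Submodule.span_induction with
      | mem x hx =>
        obtain ⟨w, hwW, rfl⟩ := hx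
        constructor
        · simpa [cplx] using hwW
        · have : (fun _ : Fin 3 => (0:ℝ)) ∈ W := W.zero_mem
          simpa [cplx] using this
      | zero =>
        have : (fun _ : Fin 3 => (0:ℝ)) ∈ W := W.zero_mem
        exact ⟨by simpa using this, by simpa using this⟩
      | add x y hx hy ihx ihy =>
        exact ⟨by simpa [Pi.add_def] using W.add_mem ihx.1 ihy.1, by simpa [Pi.add_def] using W.add_mem ihx.2 ihy.2⟩
      | smul a x hx ih =>
        constructor
        · have : (fun i => ((a • x) i).re) =
              a.re • (fun i => (x i).re) - a.im • (fun i => (x i).im) := by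
            funext i; simp [Complex.mul_re, mul_comm]
          rw [this]; exact W.sub_mem (W.smul_mem _ ih.1) (W.smul_mem _ ih.2)
        · have : (fun i => ((a • x) i).im) =
              a.re • (fun i => (x i).im) + a.im • (fun i => (x i).re) := by
            funext i; simp [Complex.mul_im, mul_comm]
          rw [this]; exact W.add_mem (W.smul_mem _ ih.2) (W.smul_mem _ ih.1)
    intro htop
    apply ht
    rw [Submodule.eq_top_iff']
    intro w
    have := (key (cplx w) (htop ▸ Submodule.mem_top)).1
    simpa [cplx] using this
  · -- invariant
    intro g v hv
    induction hv using Submodule.span_induction with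
    | mem x hx =>
      obtain ⟨w, hwW, rfl⟩ := hx
      rw [mulVec_cplx]
      exact Submodule.subset_span ⟨_, hW g w hwW, rfl⟩
    | zero => rw [Matrix.mulVec_zero]; exact Submodule.zero_mem _
    | add x y hx hy ihx ihy => rw [Matrix.mulVec_add]; exact Submodule.add_mem _ ihx ihy
    | smul a x hx ih => rw [Matrix.mulVec_smul]; exact Submodule.smul_mem _ _ ih

end

/-- Lemma 2.10: a representation of a group `G` into `GL₃(ℝ)` has a proper
nonzero invariant subspace over `ℝ` iff its complexification has one over `ℂ`;
i.e. it is `ℝ`-irreducible iff it is `ℂ`-irreducible. -/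
theorem real_reducible_iff_complex_reducible
    (G : Type*) [Group G] (ρ : G → Matrix (Fin 3) (Fin 3) ℝ)
    (hone : ρ 1 = 1) (hmul : ∀ g h : G, ρ (g * h) = ρ g * ρ h)
    (hinv : ∀ g : G, IsUnit (ρ g)) :
    (∃ W : Submodule ℝ (Fin 3 → ℝ), W ≠ ⊥ ∧ W ≠ ⊤ ∧
      ∀ g : G, ∀ v ∈ W, (ρ g).mulVec v ∈ W) ↔
    (∃ V : Submodule ℂ (Fin 3 → ℂ), V ≠ ⊥ ∧ V ≠ ⊤ ∧
      ∀ g : G, ∀ v ∈ V, ((ρ g).map (algebraMap ℝ ℂ)).mulVec v ∈ V) := by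
  constructor
  · rintro ⟨W, h0, ht, hW⟩
    exact forward G ρ W h0 ht hW
  · rintro ⟨V, h0, ht, hV⟩
    have hVb : ∀ g : G, ∀ v ∈ conjSub V, ((ρ g).map (algebraMap ℝ ℂ)).mulVec v ∈ conjSub V := by
      intro g v hv
      rw [mem_conjSub, star_mulVec_real]
      exact hV g _ hv
    by_cases hinf : V ⊓ conjSub V = ⊥
    · -- use V ⊔ conjSub V
      refine ofStable G ρ (V ⊔ conjSub V) ?_ ?_ ?_ ?_
      · intro hbot
        exact h0 (le_bot_iff.mp (hbot ▸ le_sup_left))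
      · intro htop
        have hcard := Submodule.finrank_sup_add_finrank_inf_eq V (conjSub V)
        rw [hinf, htop, finrank_conjSub] at hcard
        have h3 : Module.finrank ℂ (⊤ : Submodule ℂ (Fin 3 → ℂ)) = 3 := by
          rw [finrank_top]; simp
        rw [h3] at hcard
        simp at hcard
        omega
      · intro v hv
        obtain ⟨x, hx, y, hy, rfl⟩ := Submodule.mem_sup.mp hv
        rw [star_add]
        apply Submodule.add_mem
        · exact Submodule.mem_sup_right (by simpa [mem_conjSub] using hx)
        · exact Submodule.mem_sup_left (mem_conjSub.mp hy)
      · intro g v hv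
        obtain ⟨x, hx, y, hy, rfl⟩ := Submodule.mem_sup.mp hv
        rw [Matrix.mulVec_add]
        exact Submodule.add_mem _ (Submodule.mem_sup_left (hV g x hx))
          (Submodule.mem_sup_right (hVb g y hy))
    · -- use V ⊓ conjSub V
      refine ofStable G ρ (V ⊓ conjSub V) hinf ?_ ?_ ?_
      · intro htop
        exact ht (top_le_iff.mp (htop ▸ inf_le_left))
      · intro v hv
        exact ⟨mem_conjSub.mp hv.2, by simpa [mem_conjSub] using hv.1⟩
      · intro g v hv
        exact ⟨hV g v hv.1, hVb g v hv.2⟩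
end
end

section
/- Let G = C₂ ∗ C₃ be the free product of a cyclic group of order 2 generated by a and a cyclic group of order 3 generated by b, and let π : G → C₂ × C₃ be the canonical homomorphism (induced by the abelianized inclusions, so π(a) = (a,1) and π(b) = (1,b)). Then the kernel of π equals the subgroup of G generated by the two elements x = b·a·b²·a and y = b²·a·b·a, and moreover the group homomorphism from the free group on two generators to G sending the generators to x and y respectively is injective; hence ker π is a free group of rank 2 freely generated by b·a·b²·a and b²·a·b·a. -/
open Monoid

/-- The modular group, as the free product `C₂ ∗ C₃`. -/
abbrev ModGroup := Monoid.Coprod (Multiplicative (ZMod 2)) (Multiplicative (ZMod 3))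

/-- The generator of order 2. -/
def genA : ModGroup := Monoid.Coprod.inl (Multiplicative.ofAdd (1 : ZMod 2))

/-- The generator of order 3. -/
def genB : ModGroup := Monoid.Coprod.inr (Multiplicative.ofAdd (1 : ZMod 3))

/-- The canonical projection `C₂ ∗ C₃ → C₂ × C₃`. -/
def proj : ModGroup →* Multiplicative (ZMod 2) × Multiplicative (ZMod 3) :=
  Monoid.Coprod.lift (MonoidHom.inl _ _) (MonoidHom.inr _ _)

namespace ModProof

noncomputable section

abbrev xg : ModGroup := genB * genA * genB ^ 2 * genA
abbrev yg : ModGroup := genB ^ 2 * genA * genB * genA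

abbrev H : Subgroup ModGroup := Subgroup.closure {xg, yg}

lemma hA2 : genA * genA = 1 := by
  rw [genA, ← map_mul]
  have : Multiplicative.ofAdd (1 : ZMod 2) * Multiplicative.ofAdd (1 : ZMod 2) = 1 := by decide
  rw [this, map_one]

lemma hB3 : genB * (genB * genB) = 1 := by
  rw [genB, ← map_mul, ← map_mul]
  have : Multiplicative.ofAdd (1 : ZMod 3) * (Multiplicative.ofAdd (1 : ZMod 3) *
      Multiplicative.ofAdd (1 : ZMod 3)) = 1 := by decide
  rw [this, map_one]

lemma invA : genA⁻¹ = genA := inv_eq_of_mul_eq_one_right hA2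

lemma invB : genB⁻¹ = genB * genB := inv_eq_of_mul_eq_one_right hB3

lemma aa (z : ModGroup) : genA * (genA * z) = z := by rw [← mul_assoc, hA2, one_mul]

lemma bbb (z : ModGroup) : genB * (genB * (genB * z)) = z := by
  rw [← mul_assoc, ← mul_assoc, mul_assoc genB, hB3, one_mul]

lemma sq_genB : genB ^ 2 = genB * genB := sq genB

lemma c1 : genA * xg * genA⁻¹ = xg⁻¹ := by
  simp only [xg, sq_genB, invA, invB, mul_inv_rev, mul_assoc, aa, bbb, hA2, hB3, mul_one, one_mul]

lemma c2 : genA * yg * genA⁻¹ = yg⁻¹ := by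
  simp only [yg, sq_genB, invA, invB, mul_inv_rev, mul_assoc, aa, bbb, hA2, hB3, mul_one, one_mul]

lemma c3 : genB * xg * genB⁻¹ = yg * xg⁻¹ := by
  simp only [xg, yg, sq_genB, invA, invB, mul_inv_rev, mul_assoc, aa, bbb, hA2, hB3, mul_one,
    one_mul]

lemma c4 : genB * yg * genB⁻¹ = xg⁻¹ := by
  simp only [xg, yg, sq_genB, invA, invB, mul_inv_rev, mul_assoc, aa, bbb, hA2, hB3, mul_one,
    one_mul]

end

end ModProof

namespace ModProof

lemma xg_mem : xg ∈ H := Subgroup.subset_closure (by simp)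
lemma yg_mem : yg ∈ H := Subgroup.subset_closure (by simp)

lemma conj_of_gens {g : ModGroup} (hx : g * xg * g⁻¹ ∈ H) (hy : g * yg * g⁻¹ ∈ H) :
    ∀ h ∈ H, g * h * g⁻¹ ∈ H := by
  intro h hh
  have hmap : H.map (MulAut.conj g).toMonoidHom ≤ H := by
    rw [MonoidHom.map_closure]
    refine (Subgroup.closure_le _).2 ?_
    rintro _ ⟨s, hs, rfl⟩
    rcases hs with rfl | rfl
    · simpa [MulAut.conj_apply] using hx
    · simpa [MulAut.conj_apply] using hy
  exact hmap ⟨h, hh, by simp [MulAut.conj_apply]⟩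

lemma conj_mul {g₁ g₂ : ModGroup} (h₁ : ∀ h ∈ H, g₁ * h * g₁⁻¹ ∈ H)
    (h₂ : ∀ h ∈ H, g₂ * h * g₂⁻¹ ∈ H) : ∀ h ∈ H, (g₁ * g₂) * h * (g₁ * g₂)⁻¹ ∈ H := by
  intro h hh
  have : (g₁ * g₂) * h * (g₁ * g₂)⁻¹ = g₁ * (g₂ * h * g₂⁻¹) * g₁⁻¹ := by
    simp [mul_assoc]
  rw [this]
  exact h₁ _ (h₂ _ hh)

lemma inr2 : (Monoid.Coprod.inr (Multiplicative.ofAdd (2 : ZMod 3)) : ModGroup) = genB * genB := by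
  rw [genB, ← map_mul]
  congr 1

lemma conj_genA : ∀ h ∈ H, genA * h * genA⁻¹ ∈ H :=
  conj_of_gens (c1 ▸ H.inv_mem xg_mem) (c2 ▸ H.inv_mem yg_mem)

lemma conj_genB : ∀ h ∈ H, genB * h * genB⁻¹ ∈ H :=
  conj_of_gens (c3 ▸ H.mul_mem yg_mem (H.inv_mem xg_mem)) (c4 ▸ H.inv_mem xg_mem)

lemma conj_all : ∀ g : ModGroup, ∀ h ∈ H, g * h * g⁻¹ ∈ H := by
  intro g
  induction g using Monoid.Coprod.induction_on with
  | inl m =>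
    rcases (show ∀ m : Multiplicative (ZMod 2), m = 1 ∨ m = Multiplicative.ofAdd 1 by decide) m
      with rfl | rfl
    · simpa using fun h hh => hh
    · exact conj_genA
  | inr n =>
    rcases (show ∀ n : Multiplicative (ZMod 3), n = 1 ∨ n = Multiplicative.ofAdd 1 ∨
        n = Multiplicative.ofAdd 2 by decide) n with rfl | rfl | rfl
    · simpa using fun h hh => hh
    · exact conj_genB
    · rw [inr2]; exact conj_mul conj_genB conj_genB
  | mul x y hx hy => exact conj_mul hx hy

instance H_normal : H.Normal := ⟨fun h hh g => conj_all g h hh⟩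

lemma proj_xg : proj xg = 1 := by
  simp only [xg, map_mul, map_pow, proj, genA, genB, Monoid.Coprod.lift_apply_inl,
    Monoid.Coprod.lift_apply_inr]
  decide

lemma proj_yg : proj yg = 1 := by
  simp only [yg, map_mul, map_pow, proj, genA, genB, Monoid.Coprod.lift_apply_inl,
    Monoid.Coprod.lift_apply_inr]
  decide

lemma H_le_ker : H ≤ proj.ker := by
  refine (Subgroup.closure_le _).2 ?_
  rintro s hs
  rcases hs with rfl | rfl
  · exact proj_xg
  · exact proj_yg

lemma commAB : (genA * genB)⁻¹ * (genB * genA) = yg := by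
  simp only [mul_inv_rev, invA, invB, sq_genB, mul_assoc]

lemma commAB2 : (genA * (genB * genB))⁻¹ * ((genB * genB) * genA) = xg := by
  simp only [mul_inv_rev, invA, invB, sq_genB, mul_assoc, bbb]

lemma ker_le_H : proj.ker ≤ H := by
  set q := QuotientGroup.mk' H with hq
  have comm : ∀ (m : Multiplicative (ZMod 2)) (n : Multiplicative (ZMod 3)),
      Commute ((q.comp Monoid.Coprod.inl) m) ((q.comp Monoid.Coprod.inr) n) := by
    intro m n
    rcases (show ∀ m : Multiplicative (ZMod 2), m = 1 ∨ m = Multiplicative.ofAdd 1 by decide) m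
      with rfl | rfl
    · simpa using Commute.one_left _
    rcases (show ∀ n : Multiplicative (ZMod 3), n = 1 ∨ n = Multiplicative.ofAdd 1 ∨
        n = Multiplicative.ofAdd 2 by decide) n with rfl | rfl | rfl
    · simpa using Commute.one_right _
    · show q genA * q genB = q genB * q genA
      rw [← map_mul, ← map_mul]
      exact QuotientGroup.eq.mpr (by rw [commAB]; exact yg_mem)
    · rw [MonoidHom.comp_apply, MonoidHom.comp_apply, inr2]
      show q genA * q (genB * genB) = q (genB * genB) * q genA
      rw [← map_mul, ← map_mul]
      exact QuotientGroup.eq.mpr (by rw [commAB2]; exact xg_mem)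
  set ψ := (q.comp Monoid.Coprod.inl).noncommCoprod (q.comp Monoid.Coprod.inr) comm with hψdef
  have hψ : ψ.comp proj = q := by
    apply Monoid.Coprod.hom_ext <;> ext z <;>
      simp [ψ, proj, Monoid.Coprod.lift_apply_inl, Monoid.Coprod.lift_apply_inr]
  intro g hg
  have h1 : q g = 1 := by
    rw [MonoidHom.mem_ker] at hg
    rw [← hψ, MonoidHom.comp_apply, hg, map_one]
  exact (QuotientGroup.eq_one_iff g).mp h1

lemma part1 : proj.ker = H := le_antisymm ker_le_H H_le_ker

end ModProof

namespace ModProof2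

/-- The two-element family version of `C₂ ∗ C₃`. -/
abbrev Kfam : Bool → Type := fun b => Multiplicative (ZMod (cond b 2 3))

abbrev GI := Monoid.CoprodI Kfam

noncomputable def φ : ModGroup →* GI :=
  Monoid.Coprod.lift
    (Monoid.CoprodI.of (M := Kfam) (i := true))
    (Monoid.CoprodI.of (M := Kfam) (i := false))

def a1 : Kfam true := Multiplicative.ofAdd 1
def b1 : Kfam false := Multiplicative.ofAdd 1
def b2 : Kfam false := Multiplicative.ofAdd 2

noncomputable abbrev wA : GI := Monoid.CoprodI.of a1
noncomputable abbrev wB : GI := Monoid.CoprodI.of b1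
noncomputable abbrev wB2 : GI := Monoid.CoprodI.of b2

lemma φ_genA : φ genA = wA := by rw [genA, φ]; exact Monoid.Coprod.lift_apply_inl _ _ _
lemma φ_genB : φ genB = wB := by rw [genB, φ]; exact Monoid.Coprod.lift_apply_inr _ _ _

example : φ (genB * genA * genB ^ 2 * genA) = wB * wA * wB2 * wA := by
  have : wB * wB = wB2 := by rw [← map_mul]; rfl
  simp [map_mul, map_pow, φ_genA, φ_genB, sq, this]

end ModProof2

namespace ModProof2

open Monoid.CoprodI

noncomputable section

-- value-level computations
lemma a1a1 : a1 * a1 = 1 := by decide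
lemma b1b1 : b1 * b1 = b2 := by decide
lemma b1b2 : b1 * b2 = 1 := by decide
lemma b2b1 : b2 * b1 = 1 := by decide
lemma b2b2 : b2 * b2 = b1 := by decide
lemma a1_ne : a1 ≠ 1 := by decide
lemma b1_ne : b1 ≠ 1 := by decide
lemma b2_ne : b2 ≠ 1 := by decide

-- merge lemmas in `GI`
lemma mAA (z : GI) : wA * (wA * z) = z := by rw [← mul_assoc, ← map_mul, a1a1, map_one, one_mul]
lemma mB11 (z : GI) : wB * (wB * z) = wB2 * z := by rw [← mul_assoc, ← map_mul, b1b1]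
lemma mB12 (z : GI) : wB * (wB2 * z) = z := by rw [← mul_assoc, ← map_mul, b1b2, map_one, one_mul]
lemma mB21 (z : GI) : wB2 * (wB * z) = z := by rw [← mul_assoc, ← map_mul, b2b1, map_one, one_mul]
lemma mB22 (z : GI) : wB2 * (wB2 * z) = wB * z := by rw [← mul_assoc, ← map_mul, b2b2]
lemma bAA : wA * wA = 1 := by rw [← map_mul, a1a1, map_one]
lemma bB11 : wB * wB = wB2 := by rw [← map_mul, b1b1]
lemma bB12 : wB * wB2 = 1 := by rw [← map_mul, b1b2, map_one]
lemma bB21 : wB2 * wB = 1 := by rw [← map_mul, b2b1, map_one]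
lemma bB22 : wB2 * wB2 = wB := by rw [← map_mul, b2b2]

-- letters
abbrev lA : (Σ b, Kfam b) := ⟨true, a1⟩
abbrev lB : (Σ b, Kfam b) := ⟨false, b1⟩
abbrev lB2 : (Σ b, Kfam b) := ⟨false, b2⟩

-- convenient cons operations
def cA (w : Word Kfam) (h : w.fstIdx ≠ some true) : Word Kfam := Word.cons a1 w h a1_ne
def cB (w : Word Kfam) (h : w.fstIdx ≠ some false) : Word Kfam := Word.cons b1 w h b1_ne
def cB2 (w : Word Kfam) (h : w.fstIdx ≠ some false) : Word Kfam := Word.cons b2 w h b2_ne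

@[simp] lemma toList_cA (w h) : (cA w h).toList = lA :: w.toList := rfl
@[simp] lemma toList_cB (w h) : (cB w h).toList = lB :: w.toList := rfl
@[simp] lemma toList_cB2 (w h) : (cB2 w h).toList = lB2 :: w.toList := rfl
@[simp] lemma fstIdx_cA (w h) : (cA w h).fstIdx = some true := rfl
@[simp] lemma fstIdx_cB (w h) : (cB w h).fstIdx = some false := rfl
@[simp] lemma fstIdx_cB2 (w h) : (cB2 w h).fstIdx = some false := rfl
@[simp] lemma fstIdx_empty : (Word.empty : Word Kfam).fstIdx = none := rfl
@[simp] lemma prod_cA (w h) : (cA w h).prod = wA * w.prod := Word.prod_cons ..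
@[simp] lemma prod_cB (w h) : (cB w h).prod = wB * w.prod := Word.prod_cons ..
@[simp] lemma prod_cB2 (w h) : (cB2 w h).prod = wB2 * w.prod := Word.prod_cons ..

lemma prod_inj : Function.Injective (Word.prod : Word Kfam → GI) :=
  (Word.equiv (M := Kfam)).symm.injective

lemma smul_eq {g : GI} {w w' : Word Kfam} (h : g * w.prod = w'.prod) : g • w = w' :=
  prod_inj (by rw [Word.prod_smul, h])

lemma word_cases (w : Word Kfam) :
    w = Word.empty ∨ ∃ (i : Bool) (m : Kfam i) (w' : Word Kfam)
      (h2 : w'.fstIdx ≠ some i) (h1 : m ≠ 1), w = Word.cons m w' h2 h1 := by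
  induction w using Word.consRecOn with
  | empty => exact Or.inl rfl
  | cons i m w h1 h2 _ => exact Or.inr ⟨i, m, w, h1, h2, rfl⟩

instance (b : Bool) : NeZero (cond b 2 3) := by cases b <;> exact ⟨by decide⟩

lemma casesK2 : ∀ m : Kfam true, m ≠ 1 → m = a1 := by decide
lemma casesK3 : ∀ m : Kfam false, m ≠ 1 → m = b1 ∨ m = b2 := by decide

-- the ping-pong sets
def Xs : Fin 2 → Set (Word Kfam) := fun i =>
  {w | (if i = 0 then [lB, lA] else [lB2, lA]) <+: w.toList}
def Ys : Fin 2 → Set (Word Kfam) := fun i =>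
  {w | (if i = 0 then [lA, lB, lA] else [lA, lB2, lA]) <+: w.toList}

lemma mem_X0 {w : Word Kfam} : w ∈ Xs 0 ↔ [lB, lA] <+: w.toList := by simp [Xs]
lemma mem_X1 {w : Word Kfam} : w ∈ Xs 1 ↔ [lB2, lA] <+: w.toList := by simp [Xs]
lemma mem_Y0 {w : Word Kfam} : w ∈ Ys 0 ↔ [lA, lB, lA] <+: w.toList := by simp [Ys]
lemma mem_Y1 {w : Word Kfam} : w ∈ Ys 1 ↔ [lA, lB2, lA] <+: w.toList := by simp [Ys]

end

end ModProof2

namespace ModProof2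

open Monoid.CoprodI

noncomputable section

lemma mem_of_eq {g : GI} {w w' : Word Kfam} {S : Set (Word Kfam)}
    (h : g * w.prod = w'.prod) (hw : w' ∈ S) : g • w ∈ S := by
  rw [smul_eq h]; exact hw

lemma hX0 : ∀ w : Word Kfam, w ∉ Ys 0 → (wB * wA * wB2 * wA) • w ∈ Xs 0 := by
  intro w hw
  rcases word_cases w with rfl | ⟨i, m, w1, h2, h1, rfl⟩
  · exact mem_of_eq (w' := cB (cA (cB2 (cA Word.empty (by decide)) (by decide)) (by decide)) (by decide))
      (by simp [mul_assoc]) (mem_X0.2 ⟨_, rfl⟩)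
  · cases i with
    | true =>
      obtain rfl : m = a1 := casesK2 m h1
      rcases word_cases w1 with rfl | ⟨j, m', w2, g2, g1, rfl⟩
      · exact mem_of_eq (w' := cB (cA (cB2 Word.empty (by decide)) (by decide)) (by decide))
          (by simp [mul_assoc, mAA, bAA]) (mem_X0.2 ⟨_, rfl⟩)
      · cases j with
        | true => exact absurd (by simp) h2
        | false =>
          rcases casesK3 m' g1 with rfl | rfl
          · rcases word_cases w2 with rfl | ⟨k, m'', w3, f2, f1, rfl⟩
            · exact mem_of_eq (w' := cB (cA Word.empty (by decide)) (by decide))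
                (by simp [mul_assoc, mAA, mB21, bB21]) (mem_X0.2 ⟨_, rfl⟩)
            · cases k with
              | true =>
                obtain rfl : m'' = a1 := casesK2 m'' f1
                exact absurd (mem_Y0.2 ⟨w3.toList, rfl⟩) hw
              | false => exact absurd (by simp) g2
          · exact mem_of_eq (w' := cB (cA (cB w2 g2) (by rintro ⟨⟩)) (by rintro ⟨⟩))
              (by simp [mul_assoc, mAA, mB22]) (mem_X0.2 ⟨_, rfl⟩)
    | false =>
      exact mem_of_eq
        (w' := cB (cA (cB2 (cA (Word.cons m w1 h2 h1) (by rintro ⟨⟩)) (by rintro ⟨⟩)) (by rintro ⟨⟩)) (by rintro ⟨⟩))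
        (by simp [mul_assoc]) (mem_X0.2 ⟨_, rfl⟩)

lemma hY0 : ∀ w : Word Kfam, w ∉ Xs 0 → (wA * wB * wA * wB2) • w ∈ Ys 0 := by
  intro w hw
  rcases word_cases w with rfl | ⟨i, m, w1, h2, h1, rfl⟩
  · exact mem_of_eq (w' := cA (cB (cA (cB2 Word.empty (by decide)) (by decide)) (by decide)) (by decide))
      (by simp [mul_assoc]) (mem_Y0.2 ⟨_, rfl⟩)
  · cases i with
    | true =>
      obtain rfl : m = a1 := casesK2 m h1
      exact mem_of_eq
        (w' := cA (cB (cA (cB2 (Word.cons a1 w1 h2 h1) (by rintro ⟨⟩)) (by rintro ⟨⟩)) (by rintro ⟨⟩)) (by rintro ⟨⟩))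
        (by simp [mul_assoc]) (mem_Y0.2 ⟨_, rfl⟩)
    | false =>
      rcases casesK3 m h1 with rfl | rfl
      · rcases word_cases w1 with rfl | ⟨j, m', w2, g2, g1, rfl⟩
        · exact mem_of_eq (w' := cA (cB (cA Word.empty (by decide)) (by decide)) (by decide))
            (by simp [mul_assoc, mB21, bB21]) (mem_Y0.2 ⟨_, rfl⟩)
        · cases j with
          | false => exact absurd (by simp) h2
          | true =>
            obtain rfl : m' = a1 := casesK2 m' g1
            exact absurd (mem_X0.2 ⟨w2.toList, rfl⟩) hw
      · exact mem_of_eq (w' := cA (cB (cA (cB w1 h2) (by rintro ⟨⟩)) (by rintro ⟨⟩)) (by rintro ⟨⟩))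
          (by simp [mul_assoc, mB22]) (mem_Y0.2 ⟨_, rfl⟩)

end

end ModProof2

namespace ModProof2

open Monoid.CoprodI

noncomputable section

lemma hX1 : ∀ w : Word Kfam, w ∉ Ys 1 → (wB2 * wA * wB * wA) • w ∈ Xs 1 := by
  intro w hw
  rcases word_cases w with rfl | ⟨i, m, w1, h2, h1, rfl⟩
  · exact mem_of_eq (w' := cB2 (cA (cB (cA Word.empty (by decide)) (by decide)) (by decide)) (by decide))
      (by simp [mul_assoc]) (mem_X1.2 ⟨_, rfl⟩)
  · cases i with
    | true =>
      obtain rfl : m = a1 := casesK2 m h1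
      rcases word_cases w1 with rfl | ⟨j, m', w2, g2, g1, rfl⟩
      · exact mem_of_eq (w' := cB2 (cA (cB Word.empty (by decide)) (by decide)) (by decide))
          (by simp [mul_assoc, mAA, bAA]) (mem_X1.2 ⟨_, rfl⟩)
      · cases j with
        | true => exact absurd (by simp) h2
        | false =>
          rcases casesK3 m' g1 with rfl | rfl
          · exact mem_of_eq (w' := cB2 (cA (cB2 w2 g2) (by rintro ⟨⟩)) (by rintro ⟨⟩))
              (by simp [mul_assoc, mAA, mB11]) (mem_X1.2 ⟨_, rfl⟩)
          · rcases word_cases w2 with rfl | ⟨k, m'', w3, f2, f1, rfl⟩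
            · exact mem_of_eq (w' := cB2 (cA Word.empty (by decide)) (by decide))
                (by simp [mul_assoc, mAA, mB12, bB12]) (mem_X1.2 ⟨_, rfl⟩)
            · cases k with
              | true =>
                obtain rfl : m'' = a1 := casesK2 m'' f1
                exact absurd (mem_Y1.2 ⟨w3.toList, rfl⟩) hw
              | false => exact absurd (by simp) g2
    | false =>
      exact mem_of_eq
        (w' := cB2 (cA (cB (cA (Word.cons m w1 h2 h1) (by rintro ⟨⟩)) (by rintro ⟨⟩)) (by rintro ⟨⟩)) (by rintro ⟨⟩))
        (by simp [mul_assoc]) (mem_X1.2 ⟨_, rfl⟩)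

lemma hY1 : ∀ w : Word Kfam, w ∉ Xs 1 → (wA * wB2 * wA * wB) • w ∈ Ys 1 := by
  intro w hw
  rcases word_cases w with rfl | ⟨i, m, w1, h2, h1, rfl⟩
  · exact mem_of_eq (w' := cA (cB2 (cA (cB Word.empty (by decide)) (by decide)) (by decide)) (by decide))
      (by simp [mul_assoc]) (mem_Y1.2 ⟨_, rfl⟩)
  · cases i with
    | true =>
      obtain rfl : m = a1 := casesK2 m h1
      exact mem_of_eq
        (w' := cA (cB2 (cA (cB (Word.cons a1 w1 h2 h1) (by rintro ⟨⟩)) (by rintro ⟨⟩)) (by rintro ⟨⟩)) (by rintro ⟨⟩))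
        (by simp [mul_assoc]) (mem_Y1.2 ⟨_, rfl⟩)
    | false =>
      rcases casesK3 m h1 with rfl | rfl
      · exact mem_of_eq (w' := cA (cB2 (cA (cB2 w1 h2) (by rintro ⟨⟩)) (by rintro ⟨⟩)) (by rintro ⟨⟩))
          (by simp [mul_assoc, mB11]) (mem_Y1.2 ⟨_, rfl⟩)
      · rcases word_cases w1 with rfl | ⟨j, m', w2, g2, g1, rfl⟩
        · exact mem_of_eq (w' := cA (cB2 (cA Word.empty (by decide)) (by decide)) (by decide))
            (by simp [mul_assoc, mB12, bB12]) (mem_Y1.2 ⟨_, rfl⟩)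
        · cases j with
          | false => exact absurd (by simp) h2
          | true =>
            obtain rfl : m' = a1 := casesK2 m' g1
            exact absurd (mem_X1.2 ⟨w2.toList, rfl⟩) hw

end

end ModProof2

namespace ModProof2

open Monoid.CoprodI

noncomputable section

lemma xinv : (wB * wA * wB2 * wA)⁻¹ = wA * wB * wA * wB2 :=
  inv_eq_of_mul_eq_one_right (by simp [mul_assoc, mAA, mB21, bB12])

lemma yinv : (wB2 * wA * wB * wA)⁻¹ = wA * wB2 * wA * wB :=
  inv_eq_of_mul_eq_one_right (by simp [mul_assoc, mAA, mB12, bB21])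

abbrev L := (Σ b, Kfam b)

lemma disj_of_head {p q : List L} {a b : L} (hab : a ≠ b) :
    Disjoint {w : Word Kfam | (a :: p) <+: w.toList} {w : Word Kfam | (b :: q) <+: w.toList} := by
  rw [Set.disjoint_left]
  rintro w ⟨t1, e1⟩ ⟨t2, e2⟩
  apply hab
  simpa using congrArg List.head? (e1.trans e2.symm)

lemma disj_of_second {p q : List L} {a b c : L} (hbc : b ≠ c) :
    Disjoint {w : Word Kfam | (a :: b :: p) <+: w.toList}
      {w : Word Kfam | (a :: c :: q) <+: w.toList} := by
  rw [Set.disjoint_left]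
  rintro w ⟨t1, e1⟩ ⟨t2, e2⟩
  apply hbc
  simpa using congrArg (fun l => l.tail.head?) (e1.trans e2.symm)

lemma hXd : Pairwise (Function.onFun Disjoint Xs) := by
  have d01 : Disjoint (Xs 0) (Xs 1) := disj_of_head (by decide)
  intro i j hij
  fin_cases i <;> fin_cases j <;>
    first
      | exact absurd rfl hij
      | exact d01
      | exact d01.symm

lemma hYd : Pairwise (Function.onFun Disjoint Ys) := by
  have d01 : Disjoint (Ys 0) (Ys 1) := disj_of_second (by decide)
  intro i j hij
  fin_cases i <;> fin_cases j <;>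
    first
      | exact absurd rfl hij
      | exact d01
      | exact d01.symm

lemma hXY : ∀ i j, Disjoint (Xs i) (Ys j) := by
  intro i j
  fin_cases i <;> fin_cases j <;> exact disj_of_head (by decide)

lemma hXne : ∀ i, (Xs i).Nonempty := by
  intro i
  fin_cases i
  · exact ⟨cB (cA Word.empty (by decide)) (by decide), mem_X0.2 ⟨_, rfl⟩⟩
  · exact ⟨cB2 (cA Word.empty (by decide)) (by decide), mem_X1.2 ⟨_, rfl⟩⟩

def aI : Fin 2 → GI := fun i => if i = 0 then wB * wA * wB2 * wA else wB2 * wA * wB * wA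

lemma inj_aI : Function.Injective (FreeGroup.lift aI) := by
  apply FreeGroup.injective_lift_of_ping_pong aI Xs Ys hXne hXd hYd hXY
  · intro i
    rcases (show ∀ j : Fin 2, j = 0 ∨ j = 1 by decide) i with rfl | rfl
    · rintro z ⟨w, hw, rfl⟩
      exact hX0 w hw
    · rintro z ⟨w, hw, rfl⟩
      exact hX1 w hw
  · intro i
    rcases (show ∀ j : Fin 2, j = 0 ∨ j = 1 by decide) i with rfl | rfl
    · rintro z ⟨w, hw, rfl⟩
      simp only [Pi.inv_apply]
      rw [show aI 0 = wB * wA * wB2 * wA from if_pos rfl, xinv]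
      exact hY0 w hw
    · rintro z ⟨w, hw, rfl⟩
      simp only [Pi.inv_apply]
      rw [show aI 1 = wB2 * wA * wB * wA from if_neg (by decide), yinv]
      exact hY1 w hw

lemma comp_eq : φ.comp (FreeGroup.lift (fun i : Fin 2 =>
    if i = 0 then genB * genA * genB ^ 2 * genA else genB ^ 2 * genA * genB * genA)) =
    FreeGroup.lift aI := by
  ext i
  fin_cases i <;>
    simp [aI, map_mul, pow_two, φ_genA, φ_genB, bB11]

lemma part2 : Function.Injective
    (FreeGroup.lift (fun i : Fin 2 =>
      if i = 0 then genB * genA * genB ^ 2 * genA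
      else genB ^ 2 * genA * genB * genA) : FreeGroup (Fin 2) →* ModGroup) := by
  intro u v huv
  apply inj_aI
  have := congrArg φ huv
  rw [← MonoidHom.comp_apply, ← MonoidHom.comp_apply, comp_eq] at this
  exact this

end

end ModProof2


/-- Section 5.3: `Γ₆ = ker(PSL₂(ℤ) ↠ ℤ₂ × ℤ₃)` is freely generated by
`b a b² a` and `b² a b a`: it is the subgroup generated by those two elements,
and the homomorphism from the free group of rank 2 sending the generators to
them is injective. -/
theorem ker_proj_free_of_rank_two :
    proj.ker = Subgroup.closure
        {genB * genA * genB ^ 2 * genA, genB ^ 2 * genA * genB * genA} ∧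
    Function.Injective
      (FreeGroup.lift (fun i : Fin 2 =>
        if i = 0 then genB * genA * genB ^ 2 * genA
        else genB ^ 2 * genA * genB * genA) : FreeGroup (Fin 2) →* ModGroup) := by
  exact ⟨ModProof.part1, ModProof2.part2⟩
end
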